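/- Let f and g be real-rooted polynomials with positive leading coefficients. If for all λ, μ > 0 the polynomial (λx + μ)f + g is real-rooted, then the roots of f and g interlace with f ≪ g (f is an interleaver of g), and conversely. -/

import Mathlib

/-!
For `z` in the upper half-plane, `f(z) = |f(z)| e^{iA}` and `g(z) = |g(z)| e^{iB}`, where `A` and
`B` are the sums of the angles `arg (z - root)` over the roots of `f` and `g`. The numbers
`λz + μ` with `λ, μ > 0` fill the sector `0 < arg < arg z`, so some `(λX + μ)f + g` vanishes at
`z` exactly when `-g(z)/f(z)`, whose argument is `B - A - π` modulo `2π`, lies in that sector.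

If the roots interlace, the angles of the roots of `f` and `g` pair off so that
`0 ≤ B - A ≤ π`, which keeps `-g(z)/f(z)` out of the sector. Conversely, if all these
combinations are real-rooted, `B - A` never enters the gaps `(π, π + arg z)` and
`(-π, arg z - π)`; as the upper half-plane is connected and `B - A` lies strictly between them
near the positive real axis, `arg z - π ≤ B - A ≤ π` everywhere. Letting `z` tend to a real `x`,
`B - A` tends to `π` times the number of roots of `g` minus the number of roots of `f` above `x`,
so this difference is at most `1`, and nonnegative when `x < 0`. The roots of `f` are `≤ 0`
because its coefficients are nonnegative, and these counting bounds are the interlacing.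
-/

open Polynomial Complex Filter Finset Topology
open scoped Real

lemma arg_pos_of_im_pos {w : ℂ} (hw : 0 < w.im) : 0 < arg w :=
  (arg_nonneg_iff.2 hw.le).lt_of_ne' fun h => hw.ne' (arg_eq_zero_iff.1 h).2

lemma arg_lt_pi_of_im_pos {w : ℂ} (hw : 0 < w.im) : arg w < π :=
  arg_lt_pi_iff.2 (Or.inr hw.ne')

lemma arg_eq_pi_div_two_sub_arctan {w : ℂ} (hw : 0 < w.im) :
    arg w = π / 2 - Real.arctan (w.re / w.im) := by
  have h₀ := arg_pos_of_im_pos hw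
  have hπ := arg_lt_pi_of_im_pos hw
  rw [← inv_div w.im, ← tan_arg, ← Real.tan_pi_div_two_sub,
    Real.arctan_tan (by linarith) (by linarith)]
  ring

lemma arg_sub_ofReal_monotone {z : ℂ} (hz : 0 < z.im) : Monotone fun t : ℝ => arg (z - t) := by
  intro s t hst
  have him : ∀ u : ℝ, 0 < (z - u).im := fun u => by simpa using hz
  simp only [arg_eq_pi_div_two_sub_arctan (him _), sub_re, ofReal_re, sub_im, ofReal_im, sub_zero]
  gcongr

lemma tendsto_arg_add_mul_I_sub {x t : ℝ} (h : x ≠ t) :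
    Tendsto (fun y : ℝ => arg (x + y * I - t)) (𝓝[>] 0) (𝓝 (if x < t then π else 0)) := by
  have hformula : (fun y : ℝ => π / 2 - Real.arctan ((x - t) * y⁻¹)) =ᶠ[𝓝[>] 0]
      fun y : ℝ => arg (x + y * I - t) := by
    filter_upwards [self_mem_nhdsWithin] with y hy
    rw [arg_eq_pi_div_two_sub_arctan (by simpa using hy)]
    simp [div_eq_mul_inv]
  refine Tendsto.congr' hformula ?_
  rcases h.lt_or_gt with hlt | hgt
  · have hlim := (Real.tendsto_arctan_atBot.mono_right nhdsWithin_le_nhds).comp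
      ((tendsto_const_mul_atBot_of_neg (sub_neg.2 hlt)).2 tendsto_inv_nhdsGT_zero)
    simpa [hlt, sub_neg_eq_add, add_halves] using hlim.const_sub (π / 2)
  · have hlim := (Real.tendsto_arctan_atTop.mono_right nhdsWithin_le_nhds).comp
      (Tendsto.const_mul_atTop (sub_pos.2 hgt) tendsto_inv_nhdsGT_zero)
    simpa [hgt.not_gt] using hlim.const_sub (π / 2)

noncomputable def argSum {ι : Type*} [Fintype ι] (t : ι → ℝ) (z : ℂ) : ℝ :=
  ∑ i, arg (z - t i)

section argSum

variable {ι κ : Type*} [Fintype ι] [Fintype κ]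

lemma continuousOn_argSum (t : ι → ℝ) : ContinuousOn (argSum t) {z | 0 < z.im} := by
  refine continuousOn_finsetSum _ fun i _ z hz => ContinuousAt.continuousWithinAt ?_
  have hslit : z - t i ∈ slitPlane := mem_slitPlane_iff.2 (Or.inr (by simpa using hz.ne'))
  exact (continuousAt_arg hslit).comp (f := fun w : ℂ => w - t i) (by fun_prop)

lemma tendsto_argSum {t : ι → ℝ} {x : ℝ} (hx : ∀ i, t i ≠ x) :
    Tendsto (fun y : ℝ => argSum t (x + y * I)) (𝓝[>] 0) (𝓝 (#{i | x < t i} * π)) := by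
  have hsum : (#{i | x < t i} : ℝ) * π = ∑ i, if x < t i then π else 0 := by
    rw [← sum_filter, sum_const, nsmul_eq_mul]
  rw [hsum]
  exact tendsto_finsetSum _ fun i _ => tendsto_arg_add_mul_I_sub (hx i).symm

lemma aeval_C_mul_prod_X_sub_C (d : ℝ) (t : ι → ℝ) (z : ℂ) :
    aeval z (C d * ∏ i, (X - C (t i))) = ((d * ∏ i, ‖z - t i‖ : ℝ) : ℂ) * exp (argSum t z * I) := by
  simp only [map_mul, map_prod, map_sub, aeval_X, aeval_C, coe_algebraMap, argSum,
    ofReal_sum, Finset.sum_mul, exp_sum, ofReal_mul, ofReal_prod, mul_assoc, ← prod_mul_distrib,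
    norm_mul_exp_arg_mul_I]

lemma prod_norm_sub_pos (t : ι → ℝ) {z : ℂ} (hz : z.im ≠ 0) : 0 < ∏ i, ‖z - t i‖ :=
  prod_pos fun i _ => norm_pos_iff.2 fun h => hz (by simpa using congrArg im h)

lemma exists_argSum_sub_mem_Ioo_arg_lt (α : ι → ℝ) (β : κ → ℝ) :
    ∃ z : ℂ, 0 < z.im ∧ argSum β z - argSum α z ∈ Set.Ioo (-(π / 2)) (π / 2) ∧ arg z < π / 2 := by
  obtain ⟨x, hx₀, hαx, hβx⟩ : ∃ x : ℝ, 0 < x ∧ (∀ i, α i < x) ∧ ∀ j, β j < x :=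
    ((eventually_gt_atTop 0).and ((eventually_all.2 fun i => eventually_gt_atTop (α i)).and
      (eventually_all.2 fun j => eventually_gt_atTop (β j)))).exists
  have hD : Tendsto (fun y : ℝ => argSum β (x + y * I) - argSum α (x + y * I)) (𝓝[>] 0)
      (𝓝 0) := by
    simpa [(hαx _).not_gt, (hβx _).not_gt] using
      (tendsto_argSum fun j => (hβx j).ne).sub (tendsto_argSum fun i => (hαx i).ne)
  have harg : Tendsto (fun y : ℝ => arg (x + y * I)) (𝓝[>] 0) (𝓝 0) := by
    simpa [hx₀.not_gt] using tendsto_arg_add_mul_I_sub (t := 0) hx₀.ne'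
  have hπ := Real.pi_pos
  obtain ⟨y, hy, hDy, hargy⟩ := ((eventually_mem_nhdsWithin (a := (0 : ℝ)) (s := Set.Ioi 0)).and
    ((hD.eventually (Ioo_mem_nhds (by linarith : -(π / 2) < 0) (by linarith : 0 < π / 2))).and
      (harg.eventually (Iio_mem_nhds (by linarith : 0 < π / 2))))).exists
  exact ⟨x + y * I, by simpa using hy, hDy, hargy⟩

lemma exists_aeval_eq_mul_exp {d : ℝ} (hd : 0 < d) (t : ι → ℝ) {z : ℂ} (hz : z.im ≠ 0) :
    ∃ r : ℝ, 0 < r ∧ aeval z (C d * ∏ i, (X - C (t i))) = r * exp (argSum t z * I) :=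
  ⟨_, mul_pos hd (prod_norm_sub_pos t hz), aeval_C_mul_prod_X_sub_C d t z⟩

variable {α : ι → ℝ} {β : κ → ℝ}

lemma card_filter_lt_le_add_one (hband : ∀ z : ℂ, 0 < z.im → argSum β z - argSum α z ≤ π)
    {x : ℝ} (hα : ∀ i, α i ≠ x) (hβ : ∀ j, β j ≠ x) : #{j | x < β j} ≤ #{i | x < α i} + 1 := by
  have hle : (#{j | x < β j} : ℝ) * π - #{i | x < α i} * π ≤ π :=
    le_of_tendsto ((tendsto_argSum hβ).sub (tendsto_argSum hα)) <| by
      filter_upwards [eventually_mem_nhdsWithin] with y hy using hband _ (by simpa using hy)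
  have : (#{j | x < β j} : ℝ) ≤ #{i | x < α i} + 1 :=
    le_of_mul_le_mul_right (by linarith) Real.pi_pos
  exact_mod_cast this

lemma card_filter_lt_le_of_neg (hband : ∀ z : ℂ, 0 < z.im → arg z - π ≤ argSum β z - argSum α z)
    {x : ℝ} (hx : x < 0) (hα : ∀ i, α i ≠ x) (hβ : ∀ j, β j ≠ x) :
    #{i | x < α i} ≤ #{j | x < β j} := by
  have harg : Tendsto (fun y : ℝ => arg (x + y * I)) (𝓝[>] 0) (𝓝 π) := by
    simpa [hx] using tendsto_arg_add_mul_I_sub (t := 0) hx.ne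
  have hle : π - π ≤ (#{j | x < β j} : ℝ) * π - #{i | x < α i} * π :=
    le_of_tendsto_of_tendsto (harg.sub_const π) ((tendsto_argSum hβ).sub (tendsto_argSum hα)) <| by
      filter_upwards [eventually_mem_nhdsWithin] with y hy using hband _ (by simpa using hy)
  have : (#{i | x < α i} : ℝ) ≤ #{j | x < β j} :=
    le_of_mul_le_mul_right (by linarith) Real.pi_pos
  exact_mod_cast this

end argSum

lemma exists_pos_mul_add_pos_eq_exp {z : ℂ} (hz : 0 < z.im) {φ : ℝ} (hφ₀ : 0 < φ)
    (hφ : φ < arg z) : ∃ lam mu : ℝ, 0 < lam ∧ 0 < mu ∧ lam * z + mu = exp (φ * I) := by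
  set θ := arg z
  have hθ := arg_lt_pi_of_im_pos hz
  have hr : 0 < ‖z‖ := norm_pos_iff.2 fun h => by simp [h] at hz
  have hsinθ : 0 < Real.sin θ := Real.sin_pos_of_pos_of_lt_pi (hφ₀.trans hφ) hθ
  -- the sine rule in the triangle with vertices `0`, `mu` and `lam * z + mu`
  refine ⟨Real.sin φ / (‖z‖ * Real.sin θ), Real.sin (θ - φ) / Real.sin θ,
    div_pos (Real.sin_pos_of_pos_of_lt_pi hφ₀ (by linarith)) (by positivity),
    div_pos (Real.sin_pos_of_pos_of_lt_pi (by linarith) (by linarith)) hsinθ, ?_⟩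
  apply Complex.ext <;>
    simp only [add_re, add_im, mul_re, mul_im, ofReal_re, ofReal_im, exp_ofReal_mul_I_re,
      exp_ofReal_mul_I_im, ← norm_mul_cos_arg z, ← norm_mul_sin_arg z, Real.sin_sub] <;>
    field_simp <;> ring

lemma IsPreconnected.forall_le_zero_of_notMem_Ioo {X : Type*} [TopologicalSpace X] {s : Set X}
    (hs : IsPreconnected s) {F G : X → ℝ} (hF : ContinuousOn F s) (hG : ContinuousOn G s)
    (hG₀ : ∀ x ∈ s, 0 < G x) (hgap : ∀ x ∈ s, F x ∉ Set.Ioo 0 (G x)) {x₀ : X} (hx₀ : x₀ ∈ s)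
    (hF₀ : F x₀ ≤ 0) {x : X} (hx : x ∈ s) : F x ≤ 0 := by
  by_contra! hFx
  have hGF : G x ≤ F x := not_lt.1 fun h => hgap x hx ⟨hFx, h⟩
  -- `F - G / 2` changes sign between `x₀` and `x`, and its zeros lie in the forbidden gap
  obtain ⟨w, hw, hFw⟩ := hs.intermediate_value hx₀ hx (hF.sub (hG.div_const 2))
    (show (0 : ℝ) ∈ Set.Icc _ _ from ⟨by simp only [Pi.sub_apply]; linarith [hG₀ x₀ hx₀],
      by simp only [Pi.sub_apply]; linarith⟩)
  simp only [Pi.sub_apply] at hFw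
  have hGw := hG₀ w hw
  exact hgap w hw ⟨by linarith, by linarith⟩

lemma eval_pos_of_coeff_nonneg {p : ℝ[X]} (hp : p ≠ 0) (hco : ∀ k, 0 ≤ p.coeff k) {t : ℝ}
    (ht : 0 < t) : 0 < p.eval t := by
  rw [eval_eq_sum_range]
  refine sum_pos' (fun k _ => mul_nonneg (hco k) (pow_nonneg ht.le k))
    ⟨p.natDegree, self_mem_range_succ _, mul_pos ?_ (pow_pos ht _)⟩
  exact (hco _).lt_of_ne' (leadingCoeff_ne_zero.2 hp)

lemma nonpos_of_coeff_nonneg {ι : Type*} [Fintype ι] {d : ℝ} (hd : d ≠ 0) {t : ι → ℝ}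
    (hco : ∀ k, 0 ≤ (C d * ∏ i, (X - C (t i))).coeff k) (i : ι) : t i ≤ 0 := by
  have hne : C d * ∏ i, (X - C (t i)) ≠ 0 :=
    mul_ne_zero (C_ne_zero.2 hd) (monic_prod_of_monic _ _ fun j _ => monic_X_sub_C (t j)).ne_zero
  refine not_lt.1 fun hi => (eval_pos_of_coeff_nonneg hne hco hi).ne' ?_
  simp only [eval_mul, eval_C, eval_prod, eval_sub, eval_X]
  exact mul_eq_zero_of_right _ (prod_eq_zero (mem_univ i) (sub_self _))

def RealRootedCombinations (f g : ℝ[X]) : Prop :=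
  ∀ lam mu : ℝ, 0 < lam → 0 < mu →
    ∀ z : ℂ, aeval z ((C lam * X + C mu) * f + g) = 0 → z.im = 0

section Forward

variable {ι κ : Type*} [Fintype ι] [Fintype κ] {c c' : ℝ} {α : ι → ℝ} {β : κ → ℝ} {f g : ℝ[X]}

lemma notMem_Ioo_arg_of_exp_eq (hc : 0 < c) (hc' : 0 < c') (hf : f = C c * ∏ i, (X - C (α i)))
    (hg : g = C c' * ∏ j, (X - C (β j))) (H : RealRootedCombinations f g) {z : ℂ}
    (hz : 0 < z.im) {φ : ℝ} (hφ : exp (φ * I) = -exp ((argSum β z - argSum α z : ℝ) * I)) :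
    φ ∉ Set.Ioo 0 (arg z) := by
  rintro ⟨hφ₀, hφz⟩
  obtain ⟨rf, hrf, hfz⟩ := exists_aeval_eq_mul_exp hc α hz.ne'
  obtain ⟨rg, hrg, hgz⟩ := exists_aeval_eq_mul_exp hc' β hz.ne'
  have hexp : exp (argSum β z * I) = -exp (φ * I) * exp (argSum α z * I) := by
    rw [hφ, neg_neg, ← exp_add]
    push_cast
    ring_nf
  obtain ⟨lam, mu, hlam, hmu, hlin⟩ := exists_pos_mul_add_pos_eq_exp hz hφ₀ hφz
  -- rescaling the combination by `rg / rf` turns `lam * z + mu = exp (φ * I)` into a root at `z`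
  refine hz.ne' (H (rg / rf * lam) (rg / rf * mu) (by positivity) (by positivity) z ?_)
  rw [map_add, map_mul, hf, hg, hfz, hgz, hexp]
  simp only [map_add, map_mul, aeval_C, aeval_X, coe_algebraMap]
  have hscale : (rg / rf : ℂ) * rf = rg := div_mul_cancel₀ _ (ofReal_ne_zero.2 hrf.ne')
  push_cast
  linear_combination exp (argSum α z * I) * (rg * hlin + (lam * z + mu) * hscale)

lemma argSum_sub_mem_Icc (hc : 0 < c) (hc' : 0 < c') (hf : f = C c * ∏ i, (X - C (α i)))
    (hg : g = C c' * ∏ j, (X - C (β j))) (H : RealRootedCombinations f g) {z : ℂ}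
    (hz : 0 < z.im) : argSum β z - argSum α z ∈ Set.Icc (arg z - π) π := by
  set D := fun w => argSum β w - argSum α w
  have hs : IsPreconnected {w : ℂ | 0 < w.im} := (convex_halfSpace_im_gt 0).isPreconnected
  have hD : ContinuousOn D {w | 0 < w.im} := (continuousOn_argSum β).sub (continuousOn_argSum α)
  have harg : ContinuousOn arg {w : ℂ | 0 < w.im} := fun w hw =>
    (continuousAt_arg (mem_slitPlane_iff.2 (Or.inr (ne_of_gt hw)))).continuousWithinAt
  have hgap {w : ℂ} (hw : 0 < w.im) {φ : ℝ} (hφ : exp (φ * I) = -exp (D w * I)) :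
      φ ∉ Set.Ioo 0 (arg w) :=
    notMem_Ioo_arg_of_exp_eq hc hc' hf hg H hw hφ
  obtain ⟨z₀, hz₀, hDz₀, hargz₀⟩ := exists_argSum_sub_mem_Ioo_arg_lt α β
  constructor
  · have := hs.forall_le_zero_of_notMem_Ioo (F := fun w => arg w - π - D w)
      ((harg.sub continuousOn_const).sub hD) harg (fun w hw => arg_pos_of_im_pos hw)
      (fun w hw hF => hgap hw (φ := D w + π) (by rw [ofReal_add, add_mul, exp_add_pi_mul_I])
        ⟨by linarith [hF.2], by linarith [hF.1]⟩) hz₀ (by linarith [hDz₀.1]) hz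
    linarith
  · have := hs.forall_le_zero_of_notMem_Ioo (F := fun w => D w - π) (hD.sub continuousOn_const)
      harg (fun w hw => arg_pos_of_im_pos hw)
      (fun w hw => hgap hw (by rw [ofReal_sub, sub_mul, exp_sub_pi_mul_I])) hz₀
      (by linarith [hDz₀.2, Real.pi_pos]) hz
    linarith
end Forward

section Counting

variable {k : ℕ} {t : Fin k → ℝ} {x : ℝ}

lemma le_card_filter_lt (ht : Antitone t) {i : Fin k} (h : x < t i) :
    (i : ℕ) + 1 ≤ #{j | x < t j} := by
  rw [← Fin.card_Iic]
  exact card_le_card fun j hj => mem_filter.2 ⟨mem_univ _, h.trans_le (ht (mem_Iic.1 hj))⟩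

lemma card_filter_lt_le (ht : Antitone t) {i : Fin k} (h : t i < x) : #{j | x < t j} ≤ i := by
  rw [← Fin.card_Iio]
  exact card_le_card fun j hj => mem_Iio.2 <| lt_of_not_ge fun hij =>
    ((ht hij).trans_lt h).not_gt (mem_filter.1 hj).2

end Counting

lemma exists_mem_Ioo_forall_ne {ι κ : Type*} [Finite ι] [Finite κ] (α : ι → ℝ) (β : κ → ℝ)
    {a b : ℝ} (hab : a < b) : ∃ x ∈ Set.Ioo a b, (∀ i, α i ≠ x) ∧ ∀ j, β j ≠ x := by
  obtain ⟨x, hx, hxr⟩ :=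
    ((Set.Ioo_infinite hab).sdiff ((Set.finite_range α).union (Set.finite_range β))).nonempty
  exact ⟨x, hx, fun i h => hxr (Or.inl ⟨i, h⟩), fun j h => hxr (Or.inr ⟨j, h⟩)⟩

lemma interlace_of_card_filter_lt {m n : ℕ} {α : Fin m → ℝ} {β : Fin n → ℝ} (hα : Antitone α)
    (hβ : Antitone β) (hα₀ : ∀ i, α i ≤ 0)
    (hup : ∀ x, (∀ i, α i ≠ x) → (∀ j, β j ≠ x) → #{j | x < β j} ≤ #{i | x < α i} + 1)
    (hlo : ∀ x < 0, (∀ i, α i ≠ x) → (∀ j, β j ≠ x) → #{i | x < α i} ≤ #{j | x < β j}) :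
    (n = m ∨ n = m + 1) ∧ (∀ (i : Fin m) (hi : (i : ℕ) < n), α i ≤ β ⟨i, hi⟩) ∧
      (∀ (i : Fin m) (hi : (i : ℕ) + 1 < n), β ⟨(i : ℕ) + 1, hi⟩ ≤ α i) := by
  refine ⟨?_, fun i hi => ?_, fun i hi => ?_⟩
  · obtain ⟨x, hx₀, hxα, hxβ⟩ : ∃ x : ℝ, x < 0 ∧ (∀ i, x < α i) ∧ ∀ j, x < β j :=
      ((eventually_lt_atBot 0).and ((eventually_all.2 fun i => eventually_lt_atBot (α i)).and
        (eventually_all.2 fun j => eventually_lt_atBot (β j)))).exists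
    have hup' := hup x (fun i => (hxα i).ne') (fun j => (hxβ j).ne')
    have hlo' := hlo x hx₀ (fun i => (hxα i).ne') (fun j => (hxβ j).ne')
    simp only [hxα, hxβ, filter_true, card_univ, Fintype.card_fin] at hup' hlo'
    omega
  · by_contra! h
    obtain ⟨x, ⟨hβx, hxα⟩, hα', hβ'⟩ := exists_mem_Ioo_forall_ne α β h
    have hαβ := hlo x (hxα.trans_le (hα₀ i)) hα' hβ'
    have hα_card : (i : ℕ) + 1 ≤ #{j | x < α j} := le_card_filter_lt hα hxα
    have hβ_card : #{j | x < β j} ≤ i := card_filter_lt_le hβ hβx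
    omega
  · by_contra! h
    obtain ⟨x, ⟨hαx, hxβ⟩, hα', hβ'⟩ := exists_mem_Ioo_forall_ne α β h
    have hβα := hup x hα' hβ'
    have hβ_card : (i : ℕ) + 1 + 1 ≤ #{j | x < β j} := le_card_filter_lt hβ hxβ
    have hα_card : #{j | x < α j} ≤ i := card_filter_lt_le hα hαx
    omega

section Interlace

variable {m n : ℕ} {u : Fin m → ℝ} {v : Fin n → ℝ}

lemma sum_le_sum_of_interlace (hnm : n = m ∨ n = m + 1) (hv : ∀ j, 0 ≤ v j)
    (h : ∀ (i : Fin m) (hi : (i : ℕ) < n), u i ≤ v ⟨i, hi⟩) : ∑ i, u i ≤ ∑ j, v j := by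
  rcases hnm with rfl | rfl
  · exact sum_le_sum fun i _ => h i i.isLt
  · have hpair : ∑ i, u i ≤ ∑ i : Fin m, v i.castSucc := sum_le_sum fun i _ => h i (by omega)
    rw [Fin.sum_univ_castSucc]
    linarith [hv (Fin.last m)]

lemma sum_le_sum_add_of_interlace (hnm : n = m ∨ n = m + 1) (hu : ∀ i, 0 ≤ u i) {b : ℝ}
    (hb₀ : 0 ≤ b) (hb : ∀ j, v j ≤ b)
    (h : ∀ (i : Fin m) (hi : (i : ℕ) + 1 < n), v ⟨(i : ℕ) + 1, hi⟩ ≤ u i) :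
    ∑ j, v j ≤ ∑ i, u i + b := by
  rcases hnm with rfl | rfl
  · cases n with
    | zero => simpa using hb₀
    | succ n =>
      have hpair : ∑ i : Fin n, v i.succ ≤ ∑ i : Fin n, u i.castSucc :=
        sum_le_sum fun i _ => h i.castSucc (by simp)
      rw [Fin.sum_univ_succ, Fin.sum_univ_castSucc]
      linarith [hb 0, hu (Fin.last n)]
  · have hpair : ∑ i : Fin m, v i.succ ≤ ∑ i, u i := sum_le_sum fun i _ => h i (by omega)
    rw [Fin.sum_univ_succ]
    linarith [hb 0]

end Interlace

lemma argSum_sub_mem_Icc_of_interlace {m n : ℕ} (hnm : n = m ∨ n = m + 1) {α : Fin m → ℝ}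
    {β : Fin n → ℝ} (h₁ : ∀ (i : Fin m) (hi : (i : ℕ) < n), α i ≤ β ⟨i, hi⟩)
    (h₂ : ∀ (i : Fin m) (hi : (i : ℕ) + 1 < n), β ⟨(i : ℕ) + 1, hi⟩ ≤ α i) {z : ℂ}
    (hz : 0 < z.im) : argSum β z - argSum α z ∈ Set.Icc 0 π := by
  have hmono := arg_sub_ofReal_monotone hz
  have hnonneg (t : ℝ) : 0 ≤ arg (z - t) := arg_nonneg_iff.2 (by simpa using hz.le)
  unfold argSum
  set u := fun i => arg (z - α i)
  set v := fun j => arg (z - β j)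
  constructor
  · exact sub_nonneg.2 <| sum_le_sum_of_interlace (u := u) (v := v) hnm (fun j => hnonneg _)
      fun i hi => hmono (h₁ i hi)
  · linarith [sum_le_sum_add_of_interlace (u := u) (v := v) hnm (fun i => hnonneg _)
      Real.pi_pos.le (fun j => arg_le_pi _) fun i hi => hmono (h₂ i hi)]

lemma mul_add_mul_exp_ne_zero {z : ℂ} (hz : 0 < z.im) {lam mu rf rg A B : ℝ} (hlam : 0 < lam)
    (hrf : 0 < rf) (hrg : 0 < rg) (hBA : B - A ∈ Set.Icc 0 π) :
    (lam * z + mu) * (rf * exp (A * I)) + rg * exp (B * I) ≠ 0 := by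
  intro h
  have hB : exp (B * I) = exp ((B - A : ℝ) * I) * exp (A * I) := by
    rw [← exp_add]
    push_cast
    ring_nf
  have h' : (lam * z + mu) * rf + rg * exp ((B - A : ℝ) * I) = 0 := by
    refine (mul_eq_zero.1 ?_).resolve_right (exp_ne_zero (A * I))
    rw [← h, hB]
    ring
  have him := congrArg im h'
  simp only [add_im, mul_im, ofReal_re, ofReal_im, exp_ofReal_mul_I_im, zero_im] at him
  nlinarith [Real.sin_nonneg_of_nonneg_of_le_pi hBA.1 hBA.2, mul_pos (mul_pos hlam hz) hrf]

lemma im_eq_zero_of_aeval_eq_zero {p : ℝ[X]} (hp : ∀ z : ℂ, 0 < z.im → aeval z p ≠ 0) {z : ℂ}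
    (hz : aeval z p = 0) : z.im = 0 := by
  rcases lt_trichotomy z.im 0 with hneg | hzero | hpos
  · refine absurd ?_ (hp (starRingEnd ℂ z) (by simpa using hneg))
    rw [aeval_conj, hz, map_zero]
  · exact hzero
  · exact absurd hz (hp z hpos)

lemma realRootedCombinations_of_interlace {m n : ℕ} {c c' : ℝ} (hc : 0 < c) (hc' : 0 < c')
    {α : Fin m → ℝ} {β : Fin n → ℝ} {f g : ℝ[X]} (hf : f = C c * ∏ i, (X - C (α i)))
    (hg : g = C c' * ∏ j, (X - C (β j))) (hnm : n = m ∨ n = m + 1)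
    (h₁ : ∀ (i : Fin m) (hi : (i : ℕ) < n), α i ≤ β ⟨i, hi⟩)
    (h₂ : ∀ (i : Fin m) (hi : (i : ℕ) + 1 < n), β ⟨(i : ℕ) + 1, hi⟩ ≤ α i) :
    RealRootedCombinations f g := by
  intro lam mu hlam _ z
  refine im_eq_zero_of_aeval_eq_zero fun w hw => ?_
  obtain ⟨rf, hrf, hfw⟩ := exists_aeval_eq_mul_exp hc α hw.ne'
  obtain ⟨rg, hrg, hgw⟩ := exists_aeval_eq_mul_exp hc' β hw.ne'
  rw [map_add, map_mul, hf, hg, hfw, hgw]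
  simpa using mul_add_mul_exp_ne_zero hw hlam hrf hrg
    (argSum_sub_mem_Icc_of_interlace hnm h₁ h₂ hw) (mu := mu)

theorem interleaver_iff_linear_combinations_real_rooted_general
    (m n : ℕ) (c c' : ℝ) (hc : 0 < c) (hc' : 0 < c')
    (α : Fin m → ℝ) (β : Fin n → ℝ) (hα : Antitone α) (hβ : Antitone β)
    (f g : Polynomial ℝ)
    (hf : f = C c * ∏ i, (X - C (α i))) (hg : g = C c' * ∏ i, (X - C (β i)))
    (hfcoeff : ∀ k, 0 ≤ f.coeff k) :
    (∀ lam mu : ℝ, 0 < lam → 0 < mu →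
        ∀ z : ℂ, aeval z ((C lam * X + C mu) * f + g) = 0 → z.im = 0) ↔
      ((n = m ∨ n = m + 1) ∧
        (∀ (i : Fin m) (hi : (i : ℕ) < n), α i ≤ β ⟨i, hi⟩) ∧
        (∀ (i : Fin m) (hi : (i : ℕ) + 1 < n), β ⟨(i : ℕ) + 1, hi⟩ ≤ α i)) := by
  refine ⟨fun H => ?_, fun ⟨hnm, h₁, h₂⟩ =>
    realRootedCombinations_of_interlace hc hc' hf hg hnm h₁ h₂⟩
  have hband (z : ℂ) (hz : 0 < z.im) := argSum_sub_mem_Icc hc hc' hf hg H hz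
  exact interlace_of_card_filter_lt hα hβ (nonpos_of_coeff_nonneg hc.ne' (hf ▸ hfcoeff))
    (fun x => card_filter_lt_le_add_one fun z hz => (hband z hz).2)
    (fun x hx => card_filter_lt_le_of_neg (fun z hz => (hband z hz).1) hx)

/-- For real-rooted `f = c∏(X - αᵢ)` and `g = c'∏(X - βᵢ)` with positive leading
coefficients and nonnegative coefficients, whose roots are listed in decreasing order,
`(λx + μ)f + g` is real-rooted for all `λ, μ > 0` if and only if `f ≪ g`, i.e. the roots
interlace as `⋯ ≤ α₂ ≤ β₂ ≤ α₁ ≤ β₁`. -/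
theorem interleaver_iff_linear_combinations_real_rooted
    (m n : ℕ) (c c' : ℝ) (hc : 0 < c) (hc' : 0 < c')
    (α : Fin m → ℝ) (β : Fin n → ℝ) (hα : Antitone α) (hβ : Antitone β)
    (f g : Polynomial ℝ)
    (hf : f = C c * ∏ i, (X - C (α i))) (hg : g = C c' * ∏ i, (X - C (β i)))
    (hfcoeff : ∀ k, 0 ≤ f.coeff k) (hgcoeff : ∀ k, 0 ≤ g.coeff k) :
    (∀ lam mu : ℝ, 0 < lam → 0 < mu →
        ∀ z : ℂ, aeval z ((C lam * X + C mu) * f + g) = 0 → z.im = 0) ↔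
      ((n = m ∨ n = m + 1) ∧
        (∀ (i : Fin m) (hi : (i : ℕ) < n), α i ≤ β ⟨i, hi⟩) ∧
        (∀ (i : Fin m) (hi : (i : ℕ) + 1 < n), β ⟨(i : ℕ) + 1, hi⟩ ≤ α i)) :=
  interleaver_iff_linear_combinations_real_rooted_general m n c c' hc hc' α β hα hβ f g hf hg
    hfcoeff
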